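/- If J = [[a, c],[c̄, b]] is a positive semidefinite 2×2 Hermitian matrix (a, b ∈ ℝ, c ∈ ℂ), then the quaternion q = (a+b) + 2Im(c)i + (a−b)j + 2Re(c)k belongs to H_S. -/

import Mathlib

open Matrix ComplexOrder

def HS : Set (Quaternion ℝ) :=
  {q | 0 ≤ q.re ∧ q.imI ^ 2 + q.imJ ^ 2 + q.imK ^ 2 ≤ q.re ^ 2}

lemma Matrix.PosSemidef.fin_two_diag_nonneg_normSq_le {a b : ℝ} {c : ℂ}
    (hJ : (!![(a : ℂ), c; (starRingEnd ℂ) c, (b : ℂ)] : Matrix (Fin 2) (Fin 2) ℂ).PosSemidef) :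
    0 ≤ a ∧ 0 ≤ b ∧ Complex.normSq c ≤ a * b := by
  have ha : (0 : ℂ) ≤ a := hJ.diag_nonneg (i := 0)
  have hb : (0 : ℂ) ≤ b := hJ.diag_nonneg (i := 1)
  have hdet := hJ.det_nonneg
  rw [det_fin_two_of, Complex.mul_conj, ← Complex.ofReal_mul, ← Complex.ofReal_sub,
    Complex.zero_le_real, sub_nonneg] at hdet
  exact ⟨Complex.zero_le_real.mp ha, Complex.zero_le_real.mp hb, hdet⟩

lemma mk_mem_HS_of_normSq_le_mul {a b : ℝ} {c : ℂ} (ha : 0 ≤ a) (hb : 0 ≤ b)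
    (hc : Complex.normSq c ≤ a * b) :
    (⟨a + b, 2 * c.im, a - b, 2 * c.re⟩ : Quaternion ℝ) ∈ HS := by
  refine ⟨add_nonneg ha hb, ?_⟩
  calc (2 * c.im) ^ 2 + (a - b) ^ 2 + (2 * c.re) ^ 2
      = (a - b) ^ 2 + 4 * Complex.normSq c := by rw [Complex.normSq_apply]; ring
    _ ≤ (a - b) ^ 2 + 4 * (a * b) := by gcongr
    _ = (a + b) ^ 2 := by ring

/-- If `J = [[a, c],[c̄, b]]` is positive semidefinite, then
`q = (a+b) + 2 Im(c) i + (a−b) j + 2 Re(c) k ∈ H_S`. -/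
theorem fromJ_posSemidef_mem_HS (a b : ℝ) (c : ℂ)
    (hJ : (!![(a : ℂ), c; (starRingEnd ℂ) c, (b : ℂ)] :
      Matrix (Fin 2) (Fin 2) ℂ).PosSemidef) :
    (⟨a + b, 2 * c.im, a - b, 2 * c.re⟩ : Quaternion ℝ) ∈ HS := by
  obtain ⟨ha, hb, hc⟩ := hJ.fin_two_diag_nonneg_normSq_le
  exact mk_mem_HS_of_normSq_le_mul ha hb hc
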